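/- Let A be a two-sided skew brace. If the group (A,∘) is nilpotent of class n, then the group (A² + A²_op, +) is nilpotent of class at most n+1. -/

import Mathlib

/-- A skew (left) brace: a type with two group structures `(A,+)` and `(A,∘)`
(the latter written multiplicatively) sharing the same identity, satisfying the
left skew brace law `a ∘ (b + c) = a ∘ b − a + a ∘ c`. -/
class SkewBrace (A : Type*) extends AddGroup A, Group A where
  mul_add_eq : ∀ a b c : A, a * (b + c) = a * b - a + a * c

namespace SkewBrace

variable {A : Type*}

/-- A skew brace is two-sided if `(a + b) ∘ c = a ∘ c − c + b ∘ c`. -/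
def IsTwoSided (A : Type*) [SkewBrace A] : Prop :=
  ∀ a b c : A, (a + b) * c = a * c - c + b * c

/-- `a * b = −a + a∘b − b`. -/
def bstar [SkewBrace A] (a b : A) : A := -a + a * b - b

/-- the star operation of the opposite skew brace: `a *ₒₚ b = −b + a∘b − a`. -/
def bstarOp [SkewBrace A] (a b : A) : A := -b + a * b - a

/-- `X * Y`: the additive subgroup generated by all `x * y`, `x ∈ X`, `y ∈ Y`. -/
def starSet [SkewBrace A] (X Y : Set A) : AddSubgroup A :=
  AddSubgroup.closure {z | ∃ x ∈ X, ∃ y ∈ Y, z = bstar x y}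

/-- `A² = A * A`. -/
def sq (A : Type*) [SkewBrace A] : AddSubgroup A := starSet Set.univ Set.univ

/-- `A²ₒₚ`, the additive subgroup generated by all `a *ₒₚ b`. -/
def sqOp (A : Type*) [SkewBrace A] : AddSubgroup A :=
  AddSubgroup.closure {z | ∃ a b : A, z = bstarOp a b}

/-- A skew brace is weakly trivial if `A² ∩ A²ₒₚ = {0}`. -/
def IsWeaklyTrivial (A : Type*) [SkewBrace A] : Prop := sq A ⊓ sqOp A = ⊥

/-- An ideal of a skew brace: an additive subgroup, normal in `(A,+)` and in
`(A,∘)`, and invariant under all `λ_a : b ↦ −a + a∘b`. -/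
structure IsIdeal [SkewBrace A] (I : AddSubgroup A) : Prop where
  add_conj : ∀ a : A, ∀ x ∈ I, a + x - a ∈ I
  mul_conj : ∀ a : A, ∀ x ∈ I, a * x * a⁻¹ ∈ I
  lambda_mem : ∀ a : A, ∀ x ∈ I, -a + a * x ∈ I

/-- The left series `A¹ = A`, `Aⁿ⁺¹ = A * Aⁿ`; `leftSeries A n` is `Aⁿ⁺¹`. -/
def leftSeries (A : Type*) [SkewBrace A] : ℕ → AddSubgroup A
  | 0 => ⊤
  | n + 1 => starSet Set.univ (leftSeries A n : Set A)

/-- The right series `A⁽¹⁾ = A`, `A⁽ⁿ⁺¹⁾ = A⁽ⁿ⁾ * A`; `rightSeries A n` is `A⁽ⁿ⁺¹⁾`. -/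
def rightSeries (A : Type*) [SkewBrace A] : ℕ → AddSubgroup A
  | 0 => ⊤
  | n + 1 => starSet (rightSeries A n : Set A) Set.univ

/-- A skew brace is left nilpotent if its left series reaches `{0}`. -/
def IsLeftNilpotent (A : Type*) [SkewBrace A] : Prop := ∃ n, leftSeries A n = ⊥

/-- A skew brace is right nilpotent if its right series reaches `{0}`. -/
def IsRightNilpotent (A : Type*) [SkewBrace A] : Prop := ∃ n, rightSeries A n = ⊥

/-- The series `A⁽¹⁾ = A`, `A^[n+1]` generated by the union of `A^[i] * A^[n+1-i]`;
`strongSeries A n` is `A^[n+1]`. -/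
def strongSeries (A : Type*) [SkewBrace A] : ℕ → AddSubgroup A
  | 0 => ⊤
  | n + 1 => ⨆ i : Fin (n + 1),
      starSet (strongSeries A i.val : Set A) (strongSeries A (n - i.val) : Set A)
  decreasing_by
  · exact i.isLt
  · have := i.isLt; omega

/-- A skew brace is strongly nilpotent if the series `A^[n]` reaches `{0}`. -/
def IsStronglyNilpotent (A : Type*) [SkewBrace A] : Prop := ∃ n, strongSeries A n = ⊥

/-- The derived series of a skew brace: `A₁ = A`, `Aₙ₊₁ = Aₙ * Aₙ`;
`derivedSeriesBrace A n` is `Aₙ₊₁`. -/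
def derivedSeriesBrace (A : Type*) [SkewBrace A] : ℕ → AddSubgroup A
  | 0 => ⊤
  | n + 1 => starSet (derivedSeriesBrace A n : Set A) (derivedSeriesBrace A n : Set A)

/-- A skew brace is soluble if its derived series reaches `{0}`. -/
def IsSolubleBrace (A : Type*) [SkewBrace A] : Prop := ∃ n, derivedSeriesBrace A n = ⊥

end SkewBrace

section Aux

open SkewBrace

variable {A : Type*} [SkewBrace A]

/-- The interchange law: expanding `(p+q)*(r+s)` by the right law first. -/
private lemma expand_right_first (h2 : IsTwoSided A) (p q r s : A) :
    (p + q) * (r + s) = p * r + (bstar p s + bstarOp q r + q * s) := by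
  rw [h2 p q (r + s), SkewBrace.mul_add_eq p r s, SkewBrace.mul_add_eq q r s]
  unfold bstar bstarOp
  simp only [sub_eq_add_neg, neg_add_rev, add_assoc]

/-- The interchange law: expanding `(p+q)*(r+s)` by the left law first. -/
private lemma expand_left_first (h2 : IsTwoSided A) (p q r s : A) :
    (p + q) * (r + s) = p * r + (bstarOp q r + bstar p s + q * s) := by
  rw [SkewBrace.mul_add_eq (p + q) r s, h2 p q r, h2 p q s]
  unfold bstar bstarOp
  simp only [sub_eq_add_neg, neg_add_rev, add_assoc]

/-- The crux: any `p * s` commutes additively with any `q *ₒₚ r`. -/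
private lemma bstar_add_bstarOp_comm (h2 : IsTwoSided A) (p s q r : A) :
    bstar p s + bstarOp q r = bstarOp q r + bstar p s := by
  have E := (expand_right_first h2 p q r s).symm.trans (expand_left_first h2 p q r s)
  have E2 := add_left_cancel E
  exact add_right_cancel E2

private lemma bstar_mem_sq (a b : A) : bstar a b ∈ sq A :=
  AddSubgroup.subset_closure ⟨a, Set.mem_univ a, b, Set.mem_univ b, rfl⟩

private lemma bstarOp_mem_sqOp (a b : A) : bstarOp a b ∈ sqOp A :=
  AddSubgroup.subset_closure ⟨a, b, rfl⟩

/-- conjugation as an additive homomorphism -/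
private def conjHom (g : A) : A →+ A :=
  AddMonoidHom.mk' (fun x => g + x + -g) (by
    intro a b
    simp only [add_assoc, neg_add_cancel_left])

@[simp] private lemma conjHom_apply (g x : A) : conjHom g x = g + x + -g := rfl

/-- conjugation formula for `bstar`. -/
private lemma conj_bstar (h2 : IsTwoSided A) (g a b : A) :
    g + bstar a b + -g = bstar (a + -g) b - bstar (-g) b := by
  unfold bstar
  rw [h2 a (-g) b]
  simp only [sub_eq_add_neg, neg_add_rev, neg_neg, add_assoc, neg_add_cancel_left,
    add_neg_cancel_left, neg_add_cancel, add_neg_cancel, add_zero, zero_add]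

/-- conjugation formula for `bstarOp`. -/
private lemma conj_bstarOp (h2 : IsTwoSided A) (g a b : A) :
    g + bstarOp a b + -g = -(bstarOp g b) + bstarOp (g + a) b := by
  unfold bstarOp
  rw [h2 g a b]
  simp only [sub_eq_add_neg, neg_add_rev, neg_neg, add_assoc, neg_add_cancel_left,
    add_neg_cancel_left, neg_add_cancel, add_neg_cancel, add_zero, zero_add]

private lemma sq_le_comap (h2 : IsTwoSided A) (g : A) :
    sq A ≤ (sq A).comap (conjHom g) := by
  refine AddSubgroup.closure_le _ |>.mpr ?_
  rintro z ⟨a, -, b, -, rfl⟩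
  simp only [SetLike.mem_coe, AddSubgroup.mem_comap, conjHom_apply]
  rw [conj_bstar h2 g a b]
  exact sub_mem (bstar_mem_sq _ _) (bstar_mem_sq _ _)

private lemma sqOp_le_comap (h2 : IsTwoSided A) (g : A) :
    sqOp A ≤ (sqOp A).comap (conjHom g) := by
  refine AddSubgroup.closure_le _ |>.mpr ?_
  rintro z ⟨a, b, rfl⟩
  simp only [SetLike.mem_coe, AddSubgroup.mem_comap, conjHom_apply]
  rw [conj_bstarOp h2 g a b]
  exact add_mem (neg_mem (bstarOp_mem_sqOp _ _)) (bstarOp_mem_sqOp _ _)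

private lemma sq_normal (h2 : IsTwoSided A) : (sq A).Normal :=
  ⟨fun n hn g => sq_le_comap h2 g hn⟩

private lemma sqOp_normal (h2 : IsTwoSided A) : (sqOp A).Normal :=
  ⟨fun n hn g => sqOp_le_comap h2 g hn⟩

/-- Every element of `A²` commutes additively with every element of `A²ₒₚ`. -/
private lemma sq_comm_sqOp (h2 : IsTwoSided A) :
    ∀ u ∈ sq A, ∀ v ∈ sqOp A, u + v = v + u := by
  have step1 : ∀ z : A, (∃ a b : A, z = bstar a b) → sqOp A ≤ AddSubgroup.centralizer {z} := by
    rintro z ⟨a, b, rfl⟩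
    refine AddSubgroup.closure_le _ |>.mpr ?_
    rintro w ⟨c, d, rfl⟩
    intro t ht
    rcases Set.mem_singleton_iff.mp ht with rfl
    exact bstar_add_bstarOp_comm h2 a b c d
  have step2 : sq A ≤ AddSubgroup.centralizer (sqOp A : Set A) := by
    refine AddSubgroup.closure_le _ |>.mpr ?_
    rintro z ⟨a, -, b, -, rfl⟩
    intro v hv
    exact (step1 (bstar a b) ⟨a, b, rfl⟩ hv _ rfl).symm
  intro u hu v hv
  exact (step2 hu v hv).symm

/-- `a * b = a + bstar a b + b`. -/
private lemma mul_eq_add_bstar (a b : A) : a * b = a + bstar a b + b := by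
  unfold bstar
  simp only [sub_eq_add_neg, add_assoc, add_neg_cancel_left, neg_add_cancel_left,
    neg_add_cancel, add_neg_cancel, add_zero]

/-- `a * b = b + bstarOp a b + a`. -/
private lemma mul_eq_add_bstarOp (a b : A) : a * b = b + bstarOp a b + a := by
  unfold bstarOp
  simp only [sub_eq_add_neg, add_assoc, add_neg_cancel_left, neg_add_cancel_left,
    neg_add_cancel, add_neg_cancel, add_zero]

private lemma skew_mul_zero (a : A) : a * (0 : A) = a := by
  have h := SkewBrace.mul_add_eq a 0 0
  rw [add_zero, sub_eq_add_neg, add_assoc] at h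
  have h3 : -a + a * (0:A) = 0 := (left_eq_add.mp h)
  have h4 : a + (-a + a * (0:A)) = a + 0 := by rw [h3]
  rw [add_neg_cancel_left, add_zero] at h4
  exact h4

private lemma skew_one_eq_zero : (1 : A) = (0 : A) := by
  have := skew_mul_zero (1 : A)
  rw [one_mul] at this
  exact this.symm

/-- surjective homomorphisms map the lower central series onto the lower central series -/
private lemma lcs_map_surj {G H : Type*} [Group G] [Group H] (f : G →* H)
    (hf : Function.Surjective f) (n : ℕ) :
    Subgroup.map f (Subgroup.lowerCentralSeries (⊤ : Subgroup G) n) = Subgroup.lowerCentralSeries (⊤ : Subgroup H) n := by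
  induction n with
  | zero => simpa using Subgroup.map_top_of_surjective f hf
  | succ n ih =>
      have e1 : Subgroup.lowerCentralSeries (⊤ : Subgroup G) (n + 1) = ⁅Subgroup.lowerCentralSeries (⊤ : Subgroup G) n, ⊤⁆ := rfl
      have e2 : Subgroup.lowerCentralSeries (⊤ : Subgroup H) (n + 1) = ⁅Subgroup.lowerCentralSeries (⊤ : Subgroup H) n, ⊤⁆ := rfl
      rw [e1, e2, Subgroup.map_commutator, ih, Subgroup.map_top_of_surjective f hf]

end Aux


open SkewBrace in
/-- If `A` is a two-sided skew brace whose multiplicative group is nilpotent of class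
(at most) `n`, then the group `(A² + A²ₒₚ, +)` is nilpotent of class at most `n + 1`. -/
theorem sq_sup_sqOp_nilpotent (A : Type*) [SkewBrace A] (h : IsTwoSided A) (n : ℕ)
    (hn : Subgroup.lowerCentralSeries (⊤ : Subgroup A) n = ⊥) :
    Subgroup.lowerCentralSeries (⊤ : Subgroup (Multiplicative ↥(sq A ⊔ sqOp A))) (n + 1) = ⊥ := by
  haveI hNsq : (sq A).Normal := sq_normal h
  haveI hNsqOp : (sqOp A).Normal := sqOp_normal h
  -- quotient maps
  set Q1 := A ⧸ sq A with hQ1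
  set Q2 := A ⧸ sqOp A with hQ2
  -- the multiplicative group (A,∘) surjects onto Multiplicative Q1
  have phi1_mul : ∀ a b : A, (QuotientAddGroup.mk (a * b) : Q1) = QuotientAddGroup.mk (a + b) := by
    intro a b
    rw [QuotientAddGroup.eq]
    have hv : -(a + b) + a * b = -b + bstar a b + -(-b) := by
      unfold bstar
      simp only [sub_eq_add_neg, neg_add_rev, neg_neg, add_assoc, neg_add_cancel_left,
        add_neg_cancel_left, neg_add_cancel, add_neg_cancel, add_zero, zero_add]
    have hm : -(a + b) + a * b ∈ sq A := hv ▸ hNsq.conj_mem _ (bstar_mem_sq a b) (-b)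
    have hg : -(a * b) + (a + b) = -(-(a + b) + a * b) := by rw [neg_add_rev, neg_neg]
    rw [hg]
    exact neg_mem hm
  have phi2_mul : ∀ a b : A, (QuotientAddGroup.mk (a * b) : Q2) = QuotientAddGroup.mk (b + a) := by
    intro a b
    rw [QuotientAddGroup.eq]
    have hv : -(b + a) + a * b = -a + bstarOp a b + -(-a) := by
      unfold bstarOp
      simp only [sub_eq_add_neg, neg_add_rev, neg_neg, add_assoc, neg_add_cancel_left,
        add_neg_cancel_left, neg_add_cancel, add_neg_cancel, add_zero, zero_add]
    have hm : -(b + a) + a * b ∈ sqOp A := hv ▸ hNsqOp.conj_mem _ (bstarOp_mem_sqOp a b) (-a)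
    have hg : -(a * b) + (b + a) = -(-(b + a) + a * b) := by rw [neg_add_rev, neg_neg]
    rw [hg]
    exact neg_mem hm
  let phi1 : A →* Multiplicative Q1 :=
    { toFun := fun a => Multiplicative.ofAdd (QuotientAddGroup.mk a)
      map_one' := by
        show Multiplicative.ofAdd ((1 : A) : Q1) = 1
        rw [skew_one_eq_zero]
        rfl
      map_mul' := by
        intro a b
        have := phi1_mul a b
        exact congrArg Multiplicative.ofAdd this }
  let phi2 : A →* Multiplicative Q2 :=
    { toFun := fun a => Multiplicative.ofAdd (QuotientAddGroup.mk a⁻¹)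
      map_one' := by
        show Multiplicative.ofAdd (((1 : A)⁻¹ : A) : Q2) = 1
        rw [inv_one, skew_one_eq_zero]
        rfl
      map_mul' := by
        intro a b
        have h1 : (a * b)⁻¹ = b⁻¹ * a⁻¹ := mul_inv_rev a b
        have := phi2_mul (b⁻¹) (a⁻¹)
        rw [← h1] at this
        exact congrArg Multiplicative.ofAdd this }
  have phi1_surj : Function.Surjective phi1 := by
    intro q
    induction q using QuotientAddGroup.induction_on with
    | H a => exact ⟨a, rfl⟩
  have phi2_surj : Function.Surjective phi2 := by
    intro q
    induction q using QuotientAddGroup.induction_on with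
    | H a =>
        refine ⟨a⁻¹, ?_⟩
        show Multiplicative.ofAdd (((a⁻¹)⁻¹ : A) : Q2) = _
        rw [inv_inv]
        rfl
  have lcsQ1 : Subgroup.lowerCentralSeries (⊤ : Subgroup (Multiplicative Q1)) n = ⊥ := by
    rw [← lcs_map_surj phi1 phi1_surj n, hn, Subgroup.map_bot]
  have lcsQ2 : Subgroup.lowerCentralSeries (⊤ : Subgroup (Multiplicative Q2)) n = ⊥ := by
    rw [← lcs_map_surj phi2 phi2_surj n, hn, Subgroup.map_bot]
  -- the additive group A, multiplicatively
  let pi1 : Multiplicative A →* Multiplicative Q1 :=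
    AddMonoidHom.toMultiplicative (QuotientAddGroup.mk' (sq A))
  let pi2 : Multiplicative A →* Multiplicative Q2 :=
    AddMonoidHom.toMultiplicative (QuotientAddGroup.mk' (sqOp A))
  have hker1 : Subgroup.lowerCentralSeries (⊤ : Subgroup (Multiplicative A)) n ≤ pi1.ker := by
    rw [← Subgroup.map_eq_bot_iff]
    exact le_bot_iff.mp (lcsQ1 ▸ lowerCentralSeries.map pi1 n)
  have hker2 : Subgroup.lowerCentralSeries (⊤ : Subgroup (Multiplicative A)) n ≤ pi2.ker := by
    rw [← Subgroup.map_eq_bot_iff]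
    exact le_bot_iff.mp (lcsQ2 ▸ lowerCentralSeries.map pi2 n)
  -- the inclusion of the subgroup
  let iota : Multiplicative ↥(sq A ⊔ sqOp A) →* Multiplicative A :=
    AddMonoidHom.toMultiplicative (sq A ⊔ sqOp A).subtype
  -- finish
  have esucc : Subgroup.lowerCentralSeries (⊤ : Subgroup (Multiplicative ↥(sq A ⊔ sqOp A))) (n + 1) =
      ⁅Subgroup.lowerCentralSeries (⊤ : Subgroup (Multiplicative ↥(sq A ⊔ sqOp A))) n, ⊤⁆ := rfl
  rw [eq_bot_iff, esucc]
  refine Subgroup.commutator_le.mpr ?_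
  intro g hg y _
  rw [Subgroup.mem_bot, commutatorElement_eq_one_iff_mul_comm]
  have hmem : iota g ∈ Subgroup.lowerCentralSeries (⊤ : Subgroup (Multiplicative A)) n :=
    lowerCentralSeries.map iota n ⟨g, hg, rfl⟩
  have hval1 : ((Multiplicative.toAdd g : ↥(sq A ⊔ sqOp A)) : A) ∈ sq A := by
    have h1 : pi1 (iota g) = 1 := hker1 hmem
    have h2 : ((((Multiplicative.toAdd g : ↥(sq A ⊔ sqOp A)) : A)) : Q1) = 0 :=
      congrArg Multiplicative.toAdd h1
    exact (QuotientAddGroup.eq_zero_iff _).mp h2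
  have hval2 : ((Multiplicative.toAdd g : ↥(sq A ⊔ sqOp A)) : A) ∈ sqOp A := by
    have h1 : pi2 (iota g) = 1 := hker2 hmem
    have h2 : ((((Multiplicative.toAdd g : ↥(sq A ⊔ sqOp A)) : A)) : Q2) = 0 :=
      congrArg Multiplicative.toAdd h1
    exact (QuotientAddGroup.eq_zero_iff _).mp h2
  -- the central element commutes with everything in the join
  set u : ↥(sq A ⊔ sqOp A) := Multiplicative.toAdd g
  set w : ↥(sq A ⊔ sqOp A) := Multiplicative.toAdd y
  have hcent : (sq A ⊔ sqOp A : AddSubgroup A) ≤ AddSubgroup.centralizer {(u : A)} := by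
    refine sup_le ?_ ?_
    · intro x hx t ht
      rcases Set.mem_singleton_iff.mp ht with rfl
      exact (sq_comm_sqOp h x hx _ hval2).symm
    · intro x hx t ht
      rcases Set.mem_singleton_iff.mp ht with rfl
      exact sq_comm_sqOp h _ hval1 x hx
  have hcomm : (u : A) + (w : A) = (w : A) + (u : A) := hcent w.2 _ rfl
  have hadd : u + w = w + u := Subtype.ext (by
    push_cast
    exact hcomm)
  show g * y = y * g
  have : Multiplicative.toAdd (g * y) = Multiplicative.toAdd (y * g) := hadd
  exact Multiplicative.toAdd.injective this
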